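/- Let X be a set of ground terms such that the only occurrence of a nonce v in any term of X is inside the encrypted term {v}_k, and suppose neither k nor inv(k) is derivable from X. Then X does not derive v in the Dolev-Yao system. -/
import Mathlib


inductive Term where
  | basic : Nat → Term
  | pair : Term → Term → Term
  | enc : Term → Term → Term
deriving DecidableEq

inductive Subt : Term → Term → Prop where
  | refl (t) : Subt t t
  | pairL {s t₁ t₂} : Subt s t₁ → Subt s (.pair t₁ t₂)
  | pairR {s t₁ t₂} : Subt s t₂ → Subt s (.pair t₁ t₂)
  | encT {s t k} : Subt s t → Subt s (.enc t k)
  | encK {s t k} : Subt s k → Subt s (.enc t k)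

inductive DY (inv : Term → Term) : Set Term → Term → Prop where
  | ax {X t} : t ∈ X → DY inv X t
  | pair {X t₁ t₂} : DY inv X t₁ → DY inv X t₂ → DY inv X (.pair t₁ t₂)
  | split₁ {X t₁ t₂} : DY inv X (.pair t₁ t₂) → DY inv X t₁
  | split₂ {X t₁ t₂} : DY inv X (.pair t₁ t₂) → DY inv X t₂
  | enc {X t k} : DY inv X t → DY inv X k → DY inv X (.enc t k)
  | dec {X t k} : DY inv X (.enc t k) → DY inv X (inv k) → DY inv X t

/-- `Protected v k u` says that the only occurrence of the nonce `v` in `u`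
is inside the encrypted term `{v}_k`. -/
def Protected (v k : Term) : Term → Prop
  | .pair a b => Protected v k a ∧ Protected v k b
  | .enc a b => (Term.enc a b = Term.enc v k) ∨ (Protected v k a ∧ Protected v k b)
  | .basic n => Term.basic n ≠ v

theorem dy_nonce_secrecy (inv : Term → Term) (X : Set Term) (nv : Nat) (v k : Term)
    (hv : v = .basic nv)
    (hprot : ∀ u ∈ X, Protected v k u)
    (hk : ¬ DY inv X k) (hik : ¬ DY inv X (inv k)) :
    ¬ DY inv X v := by
  have key : ∀ t, DY inv X t → Protected v k t := by
    intro t h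
    induction h with
    | ax hm => exact hprot _ hm
    | pair _ _ ih1 ih2 => exact ⟨ih1, ih2⟩
    | split₁ _ ih => exact ih.1
    | split₂ _ ih => exact ih.2
    | enc _ _ ih1 ih2 => exact Or.inr ⟨ih1, ih2⟩
    | dec _ hk' ih =>
      rcases ih with h | h
      · injection h with h1 h2
        subst h2
        exact absurd hk' hik
      · exact h.1
  intro h
  have := key v h
  rw [hv] at this
  exact this rfl
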